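/- Let n ≥ 3 and λ ∈ ℂ, λ ≠ 0 with |Im λ|/|λ| ≤ (n-1)/(4(n-2)²). Suppose f, ψ in a complex inner product space satisfy ‖ψ‖ ≤ 2|Im λ|, ‖f‖ > 1/(2(n-2)), and -1 = (n-1)(λ²/|λ|²)‖f‖² + i(λ/|λ|²)(n-2)⟨ψ, f⟩ with Re(λ²) > 0. Then a contradiction follows. -/

import Mathlib

/-!
Write the identity as `-1 = J₁ + J₂` with `J₁ = (n-1)(λ²/|λ|²)‖f‖²` and
`J₂ = i(λ/|λ|²)(n-2)⟨ψ, f⟩`. Since `J₁` is a positive multiple of `λ²`, `Re J₁ > 0`, so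
`|J₂| = |1 + J₁| > |J₁| = (n-1)‖f‖²`. On the other hand Cauchy–Schwarz and the sector condition
give `|J₂| ≤ (n-2)‖f‖‖ψ‖/|λ| ≤ (n-1)‖f‖/(2(n-2)) < (n-1)‖f‖²`, using `‖f‖ > 1/(2(n-2))`.
-/

namespace Complex

theorem norm_lt_norm_of_neg_one_eq_add {z w : ℂ} (hz : 0 < z.re) (h : -1 = z + w) :
    ‖z‖ < ‖w‖ := by
  have hw : w = -(1 + z) := by linear_combination -h
  have hsq : ‖z‖ ^ 2 < ‖1 + z‖ ^ 2 := by
    simp only [Complex.sq_norm, normSq_apply, add_re, add_im, one_re, one_im]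
    nlinarith
  rw [hw, norm_neg]
  exact lt_of_pow_lt_pow_left₀ 2 (norm_nonneg _) hsq

theorem norm_sq_div_norm_sq {z : ℂ} (hz : z ≠ 0) : ‖z ^ 2 / (‖z‖ : ℂ) ^ 2‖ = 1 := by
  simp [norm_pow, hz]

theorem norm_div_norm_sq (z : ℂ) : ‖z / (‖z‖ : ℂ) ^ 2‖ = ‖z‖⁻¹ := by
  rcases eq_or_ne z 0 with rfl | hz
  · simp
  · simp [norm_pow]
    field_simp

theorem re_sq_div_norm_sq_pos {z : ℂ} (h : 0 < (z ^ 2).re) : 0 < (z ^ 2 / (‖z‖ : ℂ) ^ 2).re := by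
  have : z ≠ 0 := by rintro rfl; simp at h
  rw [← ofReal_pow, div_ofReal_re]
  exact div_pos h (by positivity)

end Complex

theorem norm_I_mul_div_norm_sq_mul_inner_le {E : Type*} [NormedAddCommGroup E]
    [InnerProductSpace ℂ E] (lam : ℂ) {c : ℝ} (hc : 0 ≤ c) (f ψ : E) :
    ‖Complex.I * (lam / (‖lam‖ : ℂ) ^ 2) * c * inner ℂ f ψ‖ ≤ c * ‖f‖ * (‖ψ‖ / ‖lam‖) := by
  rw [norm_mul, norm_mul, norm_mul, Complex.norm_I, Complex.norm_div_norm_sq, Complex.norm_real,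
    Real.norm_of_nonneg hc]
  calc 1 * ‖lam‖⁻¹ * c * ‖inner ℂ f ψ‖ ≤ 1 * ‖lam‖⁻¹ * c * (‖f‖ * ‖ψ‖) := by
        gcongr; exact norm_inner_le_norm f ψ
    _ = _ := by ring

theorem sub_two_mul_mul_lt_sub_one_mul_sq {n x s t : ℝ} (hn : 2 < n) (hs : s ≤ 2 * t)
    (ht : t ≤ (n - 1) / (4 * (n - 2) ^ 2)) (hx : 1 / (2 * (n - 2)) < x) :
    (n - 2) * x * s < (n - 1) * x ^ 2 := by
  have hx₀ : 0 < x := lt_trans (by bound) hx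
  have hmx : (n - 1) / (2 * (n - 2)) < (n - 1) * x := by
    rw [div_lt_iff₀ (by linarith)]
    rw [div_lt_iff₀ (by linarith)] at hx
    nlinarith
  calc (n - 2) * x * s ≤ (n - 2) * x * (2 * ((n - 1) / (4 * (n - 2) ^ 2))) := by
        gcongr
        linarith
    _ = x * ((n - 1) / (2 * (n - 2))) := by field_simp; ring
    _ < x * ((n - 1) * x) := by gcongr
    _ = (n - 1) * x ^ 2 := by ring

theorem no_indicial_root_in_sector_general
    {E : Type*} [NormedAddCommGroup E] [InnerProductSpace ℂ E]
    (n : ℕ) (hn : 3 ≤ n) (lam : ℂ)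
    (hsector : |lam.im| / ‖lam‖ ≤ ((n : ℝ) - 1) / (4 * ((n : ℝ) - 2) ^ 2))
    (f ψ : E) (hψ : ‖ψ‖ ≤ 2 * |lam.im|) (hf : 1 / (2 * ((n : ℝ) - 2)) < ‖f‖)
    (hre : 0 < (lam ^ 2).re)
    (heq : (-1 : ℂ) = ((n : ℝ) - 1) * (lam ^ 2 / (‖lam‖ : ℂ) ^ 2) * (‖f‖ ^ 2 : ℂ)
        + Complex.I * (lam / (‖lam‖ : ℂ) ^ 2) * ((n : ℝ) - 2) * (inner ℂ f ψ : ℂ)) :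
    False := by
  have hlam : lam ≠ 0 := by rintro rfl; simp at hre
  have hn₂ : (2 : ℝ) < n := by exact_mod_cast hn
  have hc : (0 : ℝ) < (n - 1) * ‖f‖ ^ 2 :=
    mul_pos (by linarith) (pow_pos (lt_trans (by bound) hf) 2)
  have hJ₁ : ((n : ℝ) - 1) * (lam ^ 2 / (‖lam‖ : ℂ) ^ 2) * (‖f‖ ^ 2 : ℂ)
      = (((n - 1) * ‖f‖ ^ 2 : ℝ) : ℂ) * (lam ^ 2 / (‖lam‖ : ℂ) ^ 2) := by
    push_cast; ring
  have hJ₂ : Complex.I * (lam / (‖lam‖ : ℂ) ^ 2) * ((n : ℝ) - 2) * (inner ℂ f ψ : ℂ)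
      = Complex.I * (lam / (‖lam‖ : ℂ) ^ 2) * ((n - 2 : ℝ) : ℂ) * inner ℂ f ψ := by
    push_cast; ring
  have hre₁ : 0 < (((n - 1) * ‖f‖ ^ 2 : ℝ) * (lam ^ 2 / (‖lam‖ : ℂ) ^ 2)).re := by
    rw [Complex.re_ofReal_mul]
    exact mul_pos hc (Complex.re_sq_div_norm_sq_pos hre)
  have hlt := Complex.norm_lt_norm_of_neg_one_eq_add hre₁ (hJ₁ ▸ hJ₂ ▸ heq)
  rw [norm_mul, Complex.norm_sq_div_norm_sq hlam, Complex.norm_real, Real.norm_of_nonneg hc.le,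
    mul_one] at hlt
  have hψlam : ‖ψ‖ / ‖lam‖ ≤ 2 * (|lam.im| / ‖lam‖) := by rw [mul_div_assoc']; gcongr
  have hle := (norm_I_mul_div_norm_sq_mul_inner_le lam (by linarith) f ψ).trans_lt
    (sub_two_mul_mul_lt_sub_one_mul_sq hn₂ hψlam hsector hf)
  linarith

/-- No indicial roots in the sector `|Im λ|/|λ| ≤ (n-1)/(4(n-2)²)` with `Re (λ²) > 0`:
if `‖ψ‖ ≤ 2 |Im λ|`, `‖f‖ > 1/(2(n-2))`, and the identity (4.27)
`-1 = (n-1)(λ²/|λ|²)‖f‖² + i(λ/|λ|²)(n-2)⟨ψ, f⟩` holds (with `⟨·,·⟩` conjugate-linear in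
the second slot, i.e. Mathlib's `inner f ψ`), then we have a contradiction. -/
theorem no_indicial_root_in_sector
    {E : Type*} [NormedAddCommGroup E] [InnerProductSpace ℂ E]
    (n : ℕ) (hn : 3 ≤ n) (lam : ℂ) (hlam : lam ≠ 0)
    (hsector : |lam.im| / ‖lam‖ ≤ ((n : ℝ) - 1) / (4 * ((n : ℝ) - 2) ^ 2))
    (f ψ : E) (hψ : ‖ψ‖ ≤ 2 * |lam.im|) (hf : 1 / (2 * ((n : ℝ) - 2)) < ‖f‖)
    (hre : 0 < (lam ^ 2).re)
    (heq : (-1 : ℂ) = ((n : ℝ) - 1) * (lam ^ 2 / (‖lam‖ : ℂ) ^ 2) * (‖f‖ ^ 2 : ℂ)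
        + Complex.I * (lam / (‖lam‖ : ℂ) ^ 2) * ((n : ℝ) - 2) * (inner ℂ f ψ : ℂ)) :
    False :=
  no_indicial_root_in_sector_general n hn lam hsector f ψ hψ hf hre heq
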